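/- Suppose u : E* → R^2 is a function on finite event sequences with u(ε) = (0,0), all values of u on single events lie in U = {(−1,0)} ∪ ({0} × R), and for each event e there are r̃(e) in R^2 and Γ̃(e) in LT+(2) ∪ {0} with u(e·τ) = r̃(e) + Γ̃(e) u(τ) for all τ, and moreover r̃(e) + Γ̃(e) x ∈ U for all x ∈ U. Then for every event e with Γ̃(e) ≠ 0: r̃_1(e) = 0, Γ̃_{1,1}(e) = 1, and Γ̃_{2,1}(e) = r̃_2(e). -/

import Mathlib

/-- `LT⁺(2)`: 2×2 lower triangular matrices with strictly positive diagonal. -/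
def LTpos2 : Set (Matrix (Fin 2) (Fin 2) ℝ) :=
  {A | (∀ i j : Fin 2, i < j → A i j = 0) ∧ ∀ i : Fin 2, 0 < A i i}

/-- `U = {(-1, 0)} ∪ ({0} × ℝ) ⊆ ℝ²`. -/
def Uset : Set (Fin 2 → ℝ) :=
  insert ![(-1 : ℝ), 0] {x | x 0 = 0}

/-!
An affine map `x ↦ r + A x` with `A` lower triangular and invertible sends the vertical line
`{0} × ℝ ⊆ U` onto the vertical line `{r₀} × ℝ`; the only vertical line inside `U` is `{0} × ℝ`,
so `r₀ = 0`. The point `(-1, 0)` then goes to `(-A₀₀, r₁ - A₁₀)`, whose first coordinate is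
nonzero, so it must be `(-1, 0)` again.
-/

open Set Matrix

theorem mem_Uset_iff {x : Fin 2 → ℝ} : x ∈ Uset ↔ (x 0 = -1 ∧ x 1 = 0) ∨ x 0 = 0 := by
  simp only [Uset, mem_insert_iff, mem_ofPred_eq, funext_iff, Fin.forall_fin_two]
  rfl

section LowerTriangular

variable {A : Matrix (Fin 2) (Fin 2) ℝ} {r : Fin 2 → ℝ}

theorem mulVec_apply_zero_of_apply_zero_one_eq_zero (hA : A 0 1 = 0) (x : Fin 2 → ℝ) :
    (A *ᵥ x) 0 = A 0 0 * x 0 := by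
  simp [mulVec, dotProduct, Fin.sum_univ_two, hA]

theorem mulVec_apply_one_fin_two (x : Fin 2 → ℝ) :
    (A *ᵥ x) 1 = A 1 0 * x 0 + A 1 1 * x 1 := by
  simp [mulVec, dotProduct, Fin.sum_univ_two]

theorem translation_apply_zero_eq_zero_of_mapsTo_Uset (hA01 : A 0 1 = 0) (hA11 : A 1 1 ≠ 0)
    (h : MapsTo (fun x => r + A *ᵥ x) Uset Uset) : r 0 = 0 := by
  by_contra hr
  have hvertical (t : ℝ) : r 1 + A 1 1 * t = 0 := by
    have hmem := mem_Uset_iff.mp (h (x := ![0, t]) (mem_Uset_iff.mpr (Or.inr rfl)))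
    simp only [Pi.add_apply, mulVec_apply_zero_of_apply_zero_one_eq_zero hA01,
      mulVec_apply_one_fin_two, cons_val_zero, cons_val_one, mul_zero, add_zero, zero_add] at hmem
    exact (hmem.resolve_right hr).2
  exact hA11 (by linarith [hvertical 0, hvertical 1])

theorem eq_of_affine_mapsTo_Uset (hA01 : A 0 1 = 0) (hA00 : A 0 0 ≠ 0) (hA11 : A 1 1 ≠ 0)
    (h : MapsTo (fun x => r + A *ᵥ x) Uset Uset) : r 0 = 0 ∧ A 0 0 = 1 ∧ A 1 0 = r 1 := by
  have hr0 := translation_apply_zero_eq_zero_of_mapsTo_Uset hA01 hA11 h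
  have hmem := mem_Uset_iff.mp (h (mem_insert ![(-1 : ℝ), 0] _))
  simp only [Pi.add_apply, mulVec_apply_zero_of_apply_zero_one_eq_zero hA01,
    mulVec_apply_one_fin_two, hr0, cons_val_zero, cons_val_one] at hmem
  refine ⟨hr0, ?_⟩
  rcases hmem with ⟨h0, h1⟩ | h0
  · constructor <;> linarith
  · exact absurd (by linarith) hA00

end LowerTriangular

theorem stmt_9_general {E : Type*}
    (rt : E → Fin 2 → ℝ) (Γ : E → Matrix (Fin 2) (Fin 2) ℝ)
    (hΓ : ∀ e : E, Γ e ∈ LTpos2 ∨ Γ e = 0)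
    (hclosed : ∀ (e : E) (x : Fin 2 → ℝ), x ∈ Uset → rt e + (Γ e).mulVec x ∈ Uset) :
    ∀ e : E, Γ e ≠ 0 →
      rt e 0 = 0 ∧ Γ e 0 0 = 1 ∧ Γ e 1 0 = rt e 1 := by
  intro e hne
  obtain ⟨hlower, hdiag⟩ := (hΓ e).resolve_right hne
  exact eq_of_affine_mapsTo_Uset (hlower 0 1 Fin.zero_lt_one) (hdiag 0).ne' (hdiag 1).ne'
    (hclosed e)

theorem stmt_9 {E : Type*} (u : List E → Fin 2 → ℝ)
    (rt : E → Fin 2 → ℝ) (Γ : E → Matrix (Fin 2) (Fin 2) ℝ)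
    (hu0 : u [] = 0)
    (huU : ∀ e : E, u [e] ∈ Uset)
    (hrec : ∀ (e : E) (τ : List E), u (e :: τ) = rt e + (Γ e).mulVec (u τ))
    (hΓ : ∀ e : E, Γ e ∈ LTpos2 ∨ Γ e = 0)
    (hclosed : ∀ (e : E) (x : Fin 2 → ℝ), x ∈ Uset → rt e + (Γ e).mulVec x ∈ Uset) :
    ∀ e : E, Γ e ≠ 0 →
      rt e 0 = 0 ∧ Γ e 0 0 = 1 ∧ Γ e 1 0 = rt e 1 :=
  stmt_9_general rt Γ hΓ hclosed
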